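/- arXiv:1605.07437 — 2 statements merged into one kernel-verified Lean document; each statement's English description precedes it below -/
import Mathlib

section
/- Let C: λ(x₁² + x₂² − x₀²) + (x₁−x₀)(x₁+x₀) = 0 be a hyperbolic circle with real points of tangency with the absolute conic N: x₁² + x₂² = x₀², where λ ∈ ℝ \ {0,1}. Then the Frégier locus of C is contained in the conic λ³(x₁² + x₂² − x₀²) + (5λ² + 8λ + 4)(x₁² − x₀²) = 0. -/
/-!
Write `C` as `(λ+1)(x₁² − x₀²) + λx₂² = 0`. For `λ = −1` it is the doubled line `x₂ = 0`, and at
a tangency point `p = [1, ±1, 0]` of `C` and `N` a right angle needs a leg along the common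
tangent, which meets `C` only at `p`. In both cases every point of `x₂ = 0` satisfies the Frégier
condition, which contradicts the uniqueness of the Frégier point. Otherwise
`p = s[(λ+1)b² + λ, λ − (λ+1)b², −2(λ+1)b]` with `b ≠ 0`, and the right triangles at `p` with one
leg through `[1, 1, 0]`, resp. `[1, −1, 0]`, give chords `(λ+2)(f₁ − f₀) = bλf₂` and
`b(λ+1)(λ+2)(f₀ + f₁) = −λ²f₂`. Multiplying them gives the conic, because
`λ³ + 5λ² + 8λ + 4 = (λ+1)(λ+2)²`.
-/

/-- Points of the real projective plane, given by homogeneous coordinates `[x₀, x₁, x₂]`. -/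
abbrev PP := Fin 3 → ℝ

/-- Cross product: line joining two points / point of intersection of two lines. -/
def cross3 (a b : PP) : PP :=
  ![a 1 * b 2 - a 2 * b 1, a 2 * b 0 - a 0 * b 2, a 0 * b 1 - a 1 * b 0]

def dot3 (a b : PP) : ℝ := a 0 * b 0 + a 1 * b 1 + a 2 * b 2

/-- `q`, `r`, `f` are collinear. -/
def Coll (q r f : PP) : Prop := dot3 (cross3 q r) f = 0

/-- Euclidean perpendicularity of the lines `pq` and `pr`
(standard inner product on directions in the affine chart `x₀ = 1`). -/
def EuclidPerp (p q r : PP) : Prop :=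
  (q 1 * p 0 - p 1 * q 0) * (r 1 * p 0 - p 1 * r 0) +
    (q 2 * p 0 - p 2 * q 0) * (r 2 * p 0 - p 2 * r 0) = 0

/-- Hyperbolic perpendicularity of the lines `pq` and `pr`:
conjugacy with respect to the absolute conic `N : x₁² + x₂² = x₀²`
(a line is perpendicular to another iff it contains its pole w.r.t. `N`). -/
def HypPerp (p q r : PP) : Prop :=
  -(cross3 p q 0 * cross3 p r 0) + cross3 p q 1 * cross3 p r 1 +
    cross3 p q 2 * cross3 p r 2 = 0

/-- Elliptic perpendicularity of the lines `pq` and `pr`: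
conjugacy with respect to the absolute polarity `x₀² + x₁² + x₂²`. -/
def EllPerp (p q r : PP) : Prop :=
  dot3 (cross3 p q) (cross3 p r) = 0

/-- `f` lies on every chord `qr` of the conic `C` such that the legs `pq`, `pr`
are perpendicular (a right triangle inscribed in `C` with right angle at `p`). -/
def IsFregier (OnC : PP → Prop) (Perp : PP → PP → PP → Prop) (p f : PP) : Prop :=
  ∀ q r : PP, OnC q → OnC r → cross3 p q ≠ 0 → cross3 p r ≠ 0 → Perp p q r →
    Coll q r f

/-- `f` is THE Frégier point of the conic `C` at `p`: the common point of the
hypotenuses of all right triangles inscribed in `C` with right angle at `p`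
(unique up to scalar). -/
def IsFregierPoint (OnC : PP → Prop) (Perp : PP → PP → PP → Prop) (p f : PP) : Prop :=
  f ≠ 0 ∧ IsFregier OnC Perp p f ∧
    ∀ f' : PP, f' ≠ 0 → IsFregier OnC Perp p f' → ∃ t : ℝ, t ≠ 0 ∧ f' = t • f

/-- The Frégier locus of a conic: all Frégier points as `p` varies on the conic. -/
def FregierLocus (OnC : PP → Prop) (Perp : PP → PP → PP → Prop) : Set PP :=
  { f | ∃ p : PP, p ≠ 0 ∧ OnC p ∧ IsFregierPoint OnC Perp p f }

def OnCircle (l : ℝ) (v : PP) : Prop :=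
  l * (v 1 ^ 2 + v 2 ^ 2 - v 0 ^ 2) + (v 1 - v 0) * (v 1 + v 0) = 0

lemma onCircle_iff {l : ℝ} {v : PP} :
    OnCircle l v ↔ (l + 1) * (v 1 ^ 2 - v 0 ^ 2) + l * v 2 ^ 2 = 0 := by
  unfold OnCircle; constructor <;> intro h <;> linear_combination h

lemma coll_of_coord_two_eq_zero {q r f : PP} (hq : q 2 = 0) (hr : r 2 = 0) (hf : f 2 = 0) :
    Coll q r f := by
  simp only [Coll, dot3, cross3, Matrix.cons_val, hq, hr, hf]
  ring

lemma IsFregierPoint.not_forall_isFregier_of_coord_two_eq_zero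
    {OnC : PP → Prop} {Perp : PP → PP → PP → Prop} {p f : PP}
    (hf : IsFregierPoint OnC Perp p f) :
    ¬ ∀ g : PP, g 2 = 0 → IsFregier OnC Perp p g := by
  intro h
  obtain ⟨-, -, huniq⟩ := hf
  obtain ⟨t₁, ht₁, e₁⟩ := huniq ![1, 0, 0] (Function.ne_iff.mpr ⟨0, by simp⟩) (h _ rfl)
  obtain ⟨t₂, -, e₂⟩ := huniq ![0, 1, 0] (Function.ne_iff.mpr ⟨1, by simp⟩) (h _ rfl)
  have hf₁ : t₁ * f 1 = 0 := by simpa using (congrFun e₁ 1).symm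
  have : t₂ * f 1 = 1 := by simpa using (congrFun e₂ 1).symm
  simp_all

lemma onCircle_neg_one_iff {v : PP} : OnCircle (-1) v ↔ v 2 = 0 := by
  simp [onCircle_iff]

lemma isFregier_onCircle_neg_one {Perp : PP → PP → PP → Prop} {p g : PP} (hg : g 2 = 0) :
    IsFregier (OnCircle (-1)) Perp p g := by
  intro q r hq hr _ _ _
  exact coll_of_coord_two_eq_zero (onCircle_neg_one_iff.mp hq) (onCircle_neg_one_iff.mp hr) hg

lemma cross3_eq_zero_of_onCircle_of_tangent {l e : ℝ} {p q : PP} (hl0 : l ≠ 0) (he : e ^ 2 = 1)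
    (hp1 : p 1 = e * p 0) (hp2 : p 2 = 0) (hq : OnCircle l q) (hq1 : q 1 = e * q 0) :
    cross3 p q = 0 := by
  have hq2 : q 2 = 0 := by
    have : l * q 2 ^ 2 = 0 := by
      unfold OnCircle at hq
      linear_combination hq - (l + 1) * q 0 ^ 2 * he - (l + 1) * (q 1 + e * q 0) * hq1
    simpa [hl0] using this
  ext i
  fin_cases i <;> simp [cross3, hp1, hp2, hq1, hq2]
  ring

lemma not_hypPerp_of_tangent {l : ℝ} {p q r : PP} (hl0 : l ≠ 0) (hl1 : l + 1 ≠ 0) (hp0 : p ≠ 0)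
    (hp : OnCircle l p) (hp2 : p 2 = 0) (hq : OnCircle l q) (hr : OnCircle l r)
    (hpq : cross3 p q ≠ 0) (hpr : cross3 p r ≠ 0) : ¬ HypPerp p q r := by
  obtain ⟨e, he, hp1⟩ : ∃ e : ℝ, e ^ 2 = 1 ∧ p 1 = e * p 0 := by
    have : (l + 1) * ((p 1 - p 0) * (p 1 + p 0)) = 0 := by
      rw [onCircle_iff, hp2] at hp; linear_combination hp
    rcases mul_eq_zero.mp ((mul_eq_zero.mp this).resolve_left hl1) with h | h
    · exact ⟨1, by norm_num, by linarith⟩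
    · exact ⟨-1, by norm_num, by linarith⟩
  have hp00 : p 0 ≠ 0 := by
    refine fun h => hp0 (funext fun i => ?_)
    fin_cases i <;> simp [h, hp1, hp2]
  intro hperp
  have key : p 0 ^ 2 * ((q 1 - e * q 0) * (r 1 - e * r 0)) = 0 := by
    simp only [HypPerp, cross3, Matrix.cons_val, hp1, hp2] at hperp
    linear_combination hperp + p 0 ^ 2 * q 2 * r 2 * he
  rcases mul_eq_zero.mp key with h | h
  · exact hp00 (pow_eq_zero_iff two_ne_zero |>.mp h)
  rcases mul_eq_zero.mp h with h | h
  · exact hpq (cross3_eq_zero_of_onCircle_of_tangent hl0 he hp1 hp2 hq (by linarith))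
  · exact hpr (cross3_eq_zero_of_onCircle_of_tangent hl0 he hp1 hp2 hr (by linarith))

def circlePoint (l b : ℝ) : PP := ![(l + 1) * b ^ 2 + l, l - (l + 1) * b ^ 2, -2 * (l + 1) * b]

lemma exists_eq_smul_circlePoint {l : ℝ} {p : PP} (hl0 : l ≠ 0) (hl1 : l + 1 ≠ 0)
    (hp : OnCircle l p) (hp2 : p 2 ≠ 0) :
    ∃ s b : ℝ, s ≠ 0 ∧ b ≠ 0 ∧ p = s • circlePoint l b := by
  rw [onCircle_iff] at hp
  have hsum : p 0 + p 1 ≠ 0 := by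
    intro h
    have : l * p 2 ^ 2 = 0 := by linear_combination hp - (l + 1) * (p 1 - p 0) * h
    simp_all
  refine ⟨(p 0 + p 1) / (2 * l), -(l * p 2) / ((l + 1) * (p 0 + p 1)), by positivity,
    by simp [*], funext fun i => ?_⟩
  fin_cases i <;> simp [circlePoint] <;> field_simp
  · linear_combination -hp
  · linear_combination hp

section Chords

variable {l s b : ℝ} {f : PP}

lemma fregier_eq_of_leg_one_one (hl1 : l + 1 ≠ 0) (hs : s ≠ 0) (hb : b ≠ 0)
    (hf : IsFregier (OnCircle l) HypPerp (s • circlePoint l b) f) :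
    -(l + 2) * f 0 + (l + 2) * f 1 - b * l * f 2 = 0 := by
  -- the second vertex is where the leg through `p` perpendicular to `p[1, 1, 0]` meets `C` again
  have h := hf ![1, 1, 0]
    ![((l + 1) * (l + 2)) ^ 2 + b ^ 2 * l * (l + 1) ^ 3,
      ((l + 1) * (l + 2)) ^ 2 - b ^ 2 * l * (l + 1) ^ 3, -2 * b * (l + 1) ^ 3 * (l + 2)]
    (by simp [OnCircle]) (by simp [OnCircle]; ring)
    (Function.ne_iff.mpr ⟨0, by simp [cross3, circlePoint, *]⟩)
    (Function.ne_iff.mpr ⟨2, ne_of_eq_of_ne (b := 8 * s * b ^ 2 * (l + 1) ^ 4)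
      (by simp [cross3, circlePoint]; ring) (by simp [*])⟩)
    (by simp [HypPerp, cross3, circlePoint]; ring)
  simp only [Coll, dot3, cross3, Matrix.cons_val] at h
  refine (mul_eq_zero.mp ?_).resolve_left (by simp [*] : 2 * b * (l + 1) ^ 3 ≠ 0)
  linear_combination h

lemma fregier_eq_of_leg_one_neg_one (hl0 : l ≠ 0) (hl1 : l + 1 ≠ 0) (hs : s ≠ 0) (hb : b ≠ 0)
    (hf : IsFregier (OnCircle l) HypPerp (s • circlePoint l b) f) :
    b * (l + 1) * (l + 2) * f 0 + b * (l + 1) * (l + 2) * f 1 + l ^ 2 * f 2 = 0 := by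
  have h := hf ![1, -1, 0]
    ![l ^ 3 + b ^ 2 * (l + 1) * (l + 2) ^ 2, l ^ 3 - b ^ 2 * (l + 1) * (l + 2) ^ 2,
      -2 * b * l * (l + 1) * (l + 2)]
    (by simp [OnCircle]) (by simp [OnCircle]; ring)
    (Function.ne_iff.mpr ⟨0, by simp [cross3, circlePoint, *]⟩)
    (Function.ne_iff.mpr ⟨2, ne_of_eq_of_ne (b := -8 * s * b ^ 2 * l * (l + 1) ^ 2)
      (by simp [cross3, circlePoint]; ring) (by simp [*])⟩)
    (by simp [HypPerp, cross3, circlePoint]; ring)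
  simp only [Coll, dot3, cross3, Matrix.cons_val] at h
  refine (mul_eq_zero.mp ?_).resolve_left (by simp [*] : 2 * l ≠ 0)
  linear_combination h

end Chords

lemma fregierConic_of_chord_eqs {l b : ℝ} {f : PP} (hb : b ≠ 0)
    (E₁ : -(l + 2) * f 0 + (l + 2) * f 1 - b * l * f 2 = 0)
    (E₂ : b * (l + 1) * (l + 2) * f 0 + b * (l + 1) * (l + 2) * f 1 + l ^ 2 * f 2 = 0) :
    l ^ 3 * (f 1 ^ 2 + f 2 ^ 2 - f 0 ^ 2) + (5 * l ^ 2 + 8 * l + 4) * (f 1 ^ 2 - f 0 ^ 2) = 0 := by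
  refine (mul_eq_zero.mp ?_).resolve_left hb
  linear_combination (b * (l + 1) * (l + 2) * (f 0 + f 1)) * E₁ + b * l * f 2 * E₂

theorem fregier_locus_of_hyperbolic_circle_real_tangency_general
    (l : ℝ) (hl0 : l ≠ 0) :
    ∀ f ∈ FregierLocus
        (fun v => l * (v 1 ^ 2 + v 2 ^ 2 - v 0 ^ 2) + (v 1 - v 0) * (v 1 + v 0) = 0)
        HypPerp,
      l ^ 3 * (f 1 ^ 2 + f 2 ^ 2 - f 0 ^ 2)
        + (5 * l ^ 2 + 8 * l + 4) * (f 1 ^ 2 - f 0 ^ 2) = 0 := by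
  rintro f ⟨p, hp0, hp, hf⟩
  change OnCircle l p at hp
  change IsFregierPoint (OnCircle l) HypPerp p f at hf
  obtain rfl | hl1 := eq_or_ne l (-1)
  · exact (hf.not_forall_isFregier_of_coord_two_eq_zero
      fun _ hg => isFregier_onCircle_neg_one hg).elim
  replace hl1 : l + 1 ≠ 0 := fun h => hl1 (by linarith)
  by_cases hp2 : p 2 = 0
  · exact (hf.not_forall_isFregier_of_coord_two_eq_zero fun _ _ _ _ hq hr hpq hpr hperp =>
      (not_hypPerp_of_tangent hl0 hl1 hp0 hp hp2 hq hr hpq hpr hperp).elim).elim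
  obtain ⟨s, b, hs, hb, rfl⟩ := exists_eq_smul_circlePoint hl0 hl1 hp hp2
  exact fregierConic_of_chord_eqs hb (fregier_eq_of_leg_one_one hl1 hs hb hf.2.1)
    (fregier_eq_of_leg_one_neg_one hl0 hl1 hs hb hf.2.1)

/-- For the hyperbolic circle
`C : λ(x₁² + x₂² − x₀²) + (x₁−x₀)(x₁+x₀) = 0` (`λ ∉ {0,1}`), the Frégier locus is
contained in the conic `λ³(x₁² + x₂² − x₀²) + (5λ² + 8λ + 4)(x₁² − x₀²) = 0`. -/
theorem fregier_locus_of_hyperbolic_circle_real_tangency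
    (l : ℝ) (hl0 : l ≠ 0) (hl1 : l ≠ 1) :
    ∀ f ∈ FregierLocus
        (fun v => l * (v 1 ^ 2 + v 2 ^ 2 - v 0 ^ 2) + (v 1 - v 0) * (v 1 + v 0) = 0)
        HypPerp,
      l ^ 3 * (f 1 ^ 2 + f 2 ^ 2 - f 0 ^ 2)
        + (5 * l ^ 2 + 8 * l + 4) * (f 1 ^ 2 - f 0 ^ 2) = 0 :=
  fregier_locus_of_hyperbolic_circle_real_tangency_general l hl0
end

section
/- Let C be the horocycle λ(x₁² + x₂² − x₀²) + (x₂ − x₀)² = 0 with λ ≠ 0 (hyperosculating the absolute conic x₁² + x₂² = x₀² at [1,0,1]). Then the Frégier locus of C is contained in the conic λ(x₁² + x₂² − x₀²) + 5(x₂ − x₀)² = 0; in particular the Frégier locus of a regular horocycle is never contained in a line. -/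
open Matrix

lemma cross3_eq_crossProduct (a b : PP) : cross3 a b = a ⨯₃ b := rfl

lemma dot3_eq_dotProduct (a b : PP) : dot3 a b = a ⬝ᵥ b := by
  simp [dot3, dotProduct, Fin.sum_univ_three]

lemma cross3_self (v : PP) : cross3 v v = 0 := cross_self v

lemma cross3_zero_right (p : PP) : cross3 p 0 = 0 := by
  simp only [cross3_eq_crossProduct, map_zero]

lemma cross3_smul_left (c : ℝ) (p q : PP) : cross3 (c • p) q = c • cross3 p q := by
  simp only [cross3_eq_crossProduct, map_smul, LinearMap.smul_apply]

lemma cross3_smul_right (c : ℝ) (p q : PP) : cross3 p (c • q) = c • cross3 p q := by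
  simp only [cross3_eq_crossProduct, map_smul]

lemma dot3_smul_left (c : ℝ) (a b : PP) : dot3 (c • a) b = c * dot3 a b := by
  simp only [dot3_eq_dotProduct, smul_dotProduct, smul_eq_mul]

lemma exists_eq_smul_of_cross3_eq_zero {v w : PP} (h : cross3 w v = 0) (hw : w ≠ 0) :
    ∃ τ : ℝ, v = τ • w := by
  rw [cross3_eq_crossProduct, ← not_ne_iff, crossProduct_ne_zero_iff_linearIndependent,
    LinearIndependent.pair_iff' hw, not_forall_not] at h
  obtain ⟨τ, hτ⟩ := h
  exact ⟨τ, hτ.symm⟩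

lemma exists_eq_smul_cross3_of_dot3_eq_zero {x y f : PP} (hx : dot3 x f = 0)
    (hy : dot3 y f = 0) (hxy : cross3 x y ≠ 0) : ∃ τ : ℝ, f = τ • cross3 x y := by
  refine exists_eq_smul_of_cross3_eq_zero ?_ hxy
  rw [dot3_eq_dotProduct] at hx hy
  simp only [cross3_eq_crossProduct, cross_cross_eq_smul_sub_smul, hx, hy, zero_smul, sub_zero]

lemma coll_self (q f : PP) : Coll q q f := by
  simp only [Coll, cross3_self, dot3_eq_dotProduct, zero_dotProduct]

lemma Coll.smul {q r f : PP} (h : Coll q r f) (b c : ℝ) : Coll (b • q) (c • r) f := by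
  simp only [Coll, cross3_smul_left, cross3_smul_right, dot3_smul_left] at h ⊢
  rw [h, mul_zero, mul_zero]

def hypForm (x y : PP) : ℝ := -(x 0 * y 0) + x 1 * y 1 + x 2 * y 2

lemma hypPerp_iff_hypForm (p q r : PP) :
    HypPerp p q r ↔ hypForm (cross3 p q) (cross3 p r) = 0 :=
  Iff.rfl

lemma hypForm_smul_smul (a b : ℝ) (x y : PP) :
    hypForm (a • x) (b • y) = a * b * hypForm x y := by
  simp only [hypForm, Pi.smul_apply, smul_eq_mul]
  ring

lemma hypPerp_comm {p q r : PP} : HypPerp p q r ↔ HypPerp p r q := by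
  simp only [hypPerp_iff_hypForm, hypForm, mul_comm]

lemma hypPerp_smul_iff {a b c : ℝ} (ha : a ≠ 0) (hb : b ≠ 0) (hc : c ≠ 0) (p q r : PP) :
    HypPerp (a • p) (b • q) (c • r) ↔ HypPerp p q r := by
  simp only [hypPerp_iff_hypForm, cross3_smul_left, cross3_smul_right, smul_smul,
    hypForm_smul_smul]
  simp [ha, hb, hc]

lemma isFregier_smul_iff {c : ℝ} (hc : c ≠ 0) (OnC : PP → Prop) (p f : PP) :
    IsFregier OnC HypPerp (c • p) f ↔ IsFregier OnC HypPerp p f := by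
  have hperp (q r : PP) : HypPerp (c • p) q r ↔ HypPerp p q r := by
    simpa only [one_smul] using hypPerp_smul_iff hc one_ne_zero one_ne_zero p q r
  simp only [IsFregier, cross3_smul_left, smul_ne_zero_iff_right hc, hperp]

lemma isFregierPoint_smul_iff {c : ℝ} (hc : c ≠ 0) (OnC : PP → Prop) (p f : PP) :
    IsFregierPoint OnC HypPerp (c • p) f ↔ IsFregierPoint OnC HypPerp p f := by
  simp only [IsFregierPoint, isFregier_smul_iff hc]

lemma isFregier_of_forall_eq_smul {OnC S : PP → Prop} {p f : PP}
    (hS : ∀ v, OnC v → v ≠ 0 → ∃ c ≠ (0 : ℝ), ∃ w, S w ∧ v = c • w)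
    (h : ∀ q r, S q → S r → cross3 p q ≠ 0 → cross3 p r ≠ 0 → HypPerp p q r →
      Coll q r f) :
    IsFregier OnC HypPerp p f := by
  intro q r hq hr hpq hpr hperp
  have hq0 : q ≠ 0 := by rintro rfl; exact hpq (cross3_zero_right p)
  have hr0 : r ≠ 0 := by rintro rfl; exact hpr (cross3_zero_right p)
  obtain ⟨b, hb, q, hSq, rfl⟩ := hS q hq hq0
  obtain ⟨c, hc, r, hSr, rfl⟩ := hS r hr hr0
  rw [cross3_smul_right, smul_ne_zero_iff_right hb] at hpq
  rw [cross3_smul_right, smul_ne_zero_iff_right hc] at hpr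
  rw [← one_smul ℝ p, hypPerp_smul_iff one_ne_zero hb hc] at hperp
  exact (h q r hSq hSr hpq hpr hperp).smul b c

lemma not_isFregierPoint_of_forall_isFregier {OnC : PP → Prop} {Perp : PP → PP → PP → Prop}
    {p : PP} (h : ∀ f, IsFregier OnC Perp p f) (f : PP) : ¬ IsFregierPoint OnC Perp p f := by
  rintro ⟨-, -, huniq⟩
  obtain ⟨a, -, ha⟩ := huniq ![1, 0, 0] (by simp) (h _)
  obtain ⟨b, -, hb⟩ := huniq ![0, 1, 0] (by simp) (h _)
  have ha0 : 1 = a * f 0 := by simpa using congrFun ha 0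
  have ha1 : a = 0 ∨ f 1 = 0 := by simpa using congrFun ha 1
  have hb1 : 1 = b * f 1 := by simpa using congrFun hb 1
  rcases ha1 with rfl | hf1
  · simp at ha0
  · simp [hf1] at hb1

namespace Horocycle

def Mem (l : ℝ) (v : PP) : Prop := l * (v 1 ^ 2 + v 2 ^ 2 - v 0 ^ 2) + (v 2 - v 0) ^ 2 = 0

def point (l s : ℝ) : PP := ![l * s ^ 2 + l + 1, -2 * l * s, l * s ^ 2 - l + 1]

def contact : PP := ![1, 0, 1]

def chord (l s u : ℝ) : PP := ![l * s * u + l - 1, l * (s + u), l + 1 - l * s * u]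

def contactLine (t : ℝ) : PP := ![t, 1, -t]

def chordBase (l t : ℝ) : PP := ![l - 5 - l * t ^ 2, 0, l + 5 + l * t ^ 2]

def fregierPoint (l t : ℝ) : PP := ![l * t ^ 2 + l + 5, -2 * l * t, l * t ^ 2 - l + 5]

variable {l : ℝ}

lemma mem_point (l s : ℝ) : Mem l (point l s) := by
  simp only [Mem, point, Fin.isValue, cons_val, cons_val_zero, cons_val_one]
  ring

lemma point_ne_zero (hl : l ≠ 0) (t : ℝ) : point l t ≠ 0 := by
  intro h
  have h0 : l * t ^ 2 + l + 1 = 0 := congrFun h 0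
  have h2 : l * t ^ 2 - l + 1 = 0 := congrFun h 2
  exact hl (by linarith)

lemma chord_ne_zero (hl : l ≠ 0) (s u : ℝ) : chord l s u ≠ 0 := by
  intro h
  have h0 : l * s * u + l - 1 = 0 := congrFun h 0
  have h2 : l + 1 - l * s * u = 0 := congrFun h 2
  exact hl (by linarith)

lemma fregierPoint_ne_zero (hl : l ≠ 0) (t : ℝ) : fregierPoint l t ≠ 0 := by
  intro h
  have h0 : l * t ^ 2 + l + 5 = 0 := congrFun h 0
  have h2 : l * t ^ 2 - l + 5 = 0 := congrFun h 2
  exact hl (by linarith)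

lemma eq_smul_of_mem (hl : l ≠ 0) {v : PP} (hv : Mem l v) (hv0 : v ≠ 0) :
    ∃ c ≠ (0 : ℝ), ∃ w, (w = contact ∨ ∃ s, w = point l s) ∧ v = c • w := by
  rw [Mem] at hv
  by_cases h20 : v 2 = v 0
  · have hv1 : v 1 = 0 := by
      have : l * v 1 ^ 2 = 0 := by rw [h20] at hv; linear_combination hv
      simpa [hl] using this
    have hv0' : v 0 ≠ 0 := by
      intro h0
      exact hv0 (by ext i; fin_cases i <;> simp [h0, hv1, h20])
    refine ⟨v 0, hv0', contact, Or.inl rfl, ?_⟩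
    ext i; fin_cases i <;> simp [contact, hv1, h20]
  · have hd : v 0 - v 2 ≠ 0 := sub_ne_zero.2 (Ne.symm h20)
    refine ⟨(v 0 - v 2) / (2 * l), div_ne_zero hd (mul_ne_zero two_ne_zero hl),
      point l (-v 1 / (v 0 - v 2)), Or.inr ⟨_, rfl⟩, ?_⟩
    ext i; fin_cases i <;>
      simp only [point, Pi.smul_apply, smul_eq_mul, Fin.isValue, Fin.zero_eta, Fin.mk_one,
        Fin.reduceFinMk, cons_val, cons_val_zero, cons_val_one] <;>
      field_simp <;> linear_combination -hv

lemma cross3_point_point (l s u : ℝ) :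
    cross3 (point l s) (point l u) = (2 * l * (s - u)) • chord l s u := by
  ext i; fin_cases i <;>
    simp only [cross3, point, chord, Pi.smul_apply, smul_eq_mul, Fin.isValue, Fin.zero_eta,
      Fin.mk_one, Fin.reduceFinMk, cons_val, cons_val_zero, cons_val_one] <;>
    ring

lemma cross3_point_contact (l t : ℝ) :
    cross3 (point l t) contact = (-2 * l) • contactLine t := by
  ext i; fin_cases i <;>
    simp only [cross3, point, contact, contactLine, Pi.smul_apply, smul_eq_mul, Fin.isValue,
      Fin.zero_eta, Fin.mk_one, Fin.reduceFinMk, cons_val, cons_val_zero, cons_val_one] <;>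
    ring

lemma cross3_contact_point (l s : ℝ) :
    cross3 contact (point l s) = (2 * l) • contactLine s := by
  ext i; fin_cases i <;>
    simp only [cross3, point, contact, contactLine, Pi.smul_apply, smul_eq_mul, Fin.isValue,
      Fin.zero_eta, Fin.mk_one, Fin.reduceFinMk, cons_val, cons_val_zero, cons_val_one] <;>
    ring

lemma cross3_point_point_eq_zero_iff (hl : l ≠ 0) {s u : ℝ} :
    cross3 (point l s) (point l u) = 0 ↔ s = u := by
  simp [cross3_point_point, chord_ne_zero hl, hl, sub_eq_zero]

lemma coll_point_point_iff (hl : l ≠ 0) {s u : ℝ} (hsu : s ≠ u) (f : PP) :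
    Coll (point l s) (point l u) f ↔ dot3 (chord l s u) f = 0 := by
  simp [Coll, cross3_point_point, dot3_smul_left, hl, sub_eq_zero, hsu]

lemma hypForm_chord_chord (l t s u : ℝ) :
    hypForm (chord l t s) (chord l t u) = l * (l * (s - t) * (u - t) + 4) := by
  simp only [hypForm, chord, Fin.isValue, cons_val, cons_val_zero, cons_val_one]
  ring

lemma hypForm_contactLine_chord (l t u : ℝ) :
    hypForm (contactLine t) (chord l t u) = l * (u - t) := by
  simp only [hypForm, contactLine, chord, Fin.isValue, cons_val, cons_val_zero, cons_val_one]
  ring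

lemma hypForm_contactLine_contactLine (s u : ℝ) :
    hypForm (contactLine s) (contactLine u) = 1 := by
  simp [hypForm, contactLine]

lemma hypPerp_point_iff (hl : l ≠ 0) {t s u : ℝ} :
    HypPerp (point l t) (point l s) (point l u) ↔
      t = s ∨ t = u ∨ l * (s - t) * (u - t) + 4 = 0 := by
  simp [hypPerp_iff_hypForm, cross3_point_point, hypForm_smul_smul, hypForm_chord_chord, hl,
    sub_eq_zero, or_assoc]

lemma hypPerp_point_contact_iff (hl : l ≠ 0) {t u : ℝ} :
    HypPerp (point l t) contact (point l u) ↔ t = u := by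
  rw [hypPerp_iff_hypForm, cross3_point_contact, cross3_point_point, hypForm_smul_smul,
    hypForm_contactLine_chord,
    show -2 * l * (2 * l * (t - u)) * (l * (u - t)) = 4 * l ^ 3 * (t - u) ^ 2 by ring]
  simp [hl, sub_eq_zero]

lemma not_hypPerp_contact (hl : l ≠ 0) (s u : ℝ) :
    ¬ HypPerp contact (point l s) (point l u) := by
  simp [hypPerp_iff_hypForm, cross3_contact_point, hypForm_smul_smul,
    hypForm_contactLine_contactLine, hl]

lemma chord_eq_of_perp {t s u : ℝ} (h : l * (s - t) * (u - t) + 4 = 0) :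
    chord l s u = (l * (s + u)) • contactLine t + chordBase l t := by
  ext i; fin_cases i <;>
    simp only [chord, contactLine, chordBase, Pi.add_apply, Pi.smul_apply, smul_eq_mul,
      Fin.isValue, Fin.zero_eta, Fin.mk_one, Fin.reduceFinMk, cons_val, cons_val_zero,
      cons_val_one]
  · linear_combination h
  · ring
  · linear_combination -h

lemma fregierPoint_eq_cross3 (l t : ℝ) :
    fregierPoint l t = cross3 (contactLine t) (chordBase l t) := by
  ext i; fin_cases i <;>
    simp only [fregierPoint, cross3, contactLine, chordBase, Fin.isValue, Fin.zero_eta,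
      Fin.mk_one, Fin.reduceFinMk, cons_val, cons_val_zero, cons_val_one] <;>
    ring

lemma dot3_pencil_fregierPoint (c : ℝ) (l t : ℝ) :
    dot3 (c • contactLine t + chordBase l t) (fregierPoint l t) = 0 := by
  rw [dot3_eq_dotProduct, fregierPoint_eq_cross3, cross3_eq_crossProduct, add_dotProduct,
    smul_dotProduct, dot_self_cross, dot_cross_self, smul_zero, add_zero]

lemma isFregier_contact (hl : l ≠ 0) (f : PP) : IsFregier (Mem l) HypPerp contact f := by
  refine isFregier_of_forall_eq_smul (fun v hv hv0 => eq_smul_of_mem hl hv hv0) ?_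
  rintro q r (rfl | ⟨s, rfl⟩) (rfl | ⟨u, rfl⟩) hq hr hperp
  · exact absurd (cross3_self _) hq
  · exact absurd (cross3_self _) hq
  · exact absurd (cross3_self _) hr
  · exact absurd hperp (not_hypPerp_contact hl s u)

lemma isFregier_point (hl : l ≠ 0) (t : ℝ) :
    IsFregier (Mem l) HypPerp (point l t) (fregierPoint l t) := by
  refine isFregier_of_forall_eq_smul (fun v hv hv0 => eq_smul_of_mem hl hv hv0) ?_
  rintro q r (rfl | ⟨s, rfl⟩) (rfl | ⟨u, rfl⟩) hq hr hperp
  · exact coll_self _ _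
  · obtain rfl := (hypPerp_point_contact_iff hl).1 hperp
    exact absurd (cross3_self _) hr
  · obtain rfl := (hypPerp_point_contact_iff hl).1 (hypPerp_comm.1 hperp)
    exact absurd (cross3_self _) hq
  · rw [Ne, cross3_point_point_eq_zero_iff hl] at hq hr
    have hright : l * (s - t) * (u - t) + 4 = 0 :=
      ((hypPerp_point_iff hl).1 hperp).resolve_left hq |>.resolve_left hr
    rcases eq_or_ne s u with rfl | hsu
    · exact coll_self _ _
    rw [coll_point_point_iff hl hsu, chord_eq_of_perp hright]
    exact dot3_pencil_fregierPoint _ l t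

lemma dot3_pencil_eq_zero_of_isFregier (hl : l ≠ 0) {t : ℝ} {f : PP}
    (hf : IsFregier (Mem l) HypPerp (point l t) f) {s u : ℝ}
    (hright : l * (s - t) * (u - t) + 4 = 0) (hsu : s ≠ u) :
    dot3 ((l * (s + u)) • contactLine t + chordBase l t) f = 0 := by
  have hts : t ≠ s := by rintro rfl; norm_num at hright
  have htu : t ≠ u := by rintro rfl; norm_num at hright
  rw [← chord_eq_of_perp hright, ← coll_point_point_iff hl hsu]
  exact hf _ _ (mem_point l s) (mem_point l u) ((cross3_point_point_eq_zero_iff hl).not.2 hts)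
    ((cross3_point_point_eq_zero_iff hl).not.2 htu) ((hypPerp_point_iff hl).2 (.inr (.inr hright)))

lemma exists_ne_zero_pow_four_ne (c : ℝ) : ∃ k : ℝ, k ≠ 0 ∧ k ^ 4 ≠ c := by
  by_cases h : c = 1
  · exact ⟨2, two_ne_zero, by norm_num [h]⟩
  · exact ⟨1, one_ne_zero, by simpa [eq_comm] using h⟩

lemma eq_smul_fregierPoint_of_isFregier (hl : l ≠ 0) {t : ℝ} {f : PP}
    (hf : IsFregier (Mem l) HypPerp (point l t) f) : ∃ τ : ℝ, f = τ • fregierPoint l t := by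
  obtain ⟨k, hk0, hk⟩ := exists_ne_zero_pow_four_ne (16 * l ^ 2)
  obtain ⟨hk_add, hk_sub⟩ : k ^ 2 + 4 * l ≠ 0 ∧ k ^ 2 - 4 * l ≠ 0 := by
    rw [← mul_ne_zero_iff]
    intro h
    exact hk (by linear_combination h)
  -- The right-angle chords joining the parameters `t ± k / l` and `t ∓ 4 / k` are proper
  -- (`k ^ 2 ≠ -4 l`) and distinct (`k ^ 2 ≠ 4 l`), so `f` lies on two lines of the pencil.
  have hright (k : ℝ) (hk0 : k ≠ 0) : l * (t + k / l - t) * (t - 4 / k - t) + 4 = 0 := by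
    field_simp
    ring
  have hsu (k : ℝ) (hk0 : k ≠ 0) (hk : k ^ 2 + 4 * l ≠ 0) : t + k / l ≠ t - 4 / k := by
    intro h
    field_simp at h
    exact hk (by linear_combination h)
  have h₁ := dot3_pencil_eq_zero_of_isFregier hl hf (hright k hk0) (hsu k hk0 hk_add)
  have h₂ := dot3_pencil_eq_zero_of_isFregier hl hf (hright (-k) (neg_ne_zero.2 hk0))
    (hsu (-k) (neg_ne_zero.2 hk0) (by rwa [neg_sq]))
  rw [dot3_eq_dotProduct, add_dotProduct, smul_dotProduct, smul_eq_mul] at h₁ h₂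
  have hcoef : l * (t + k / l + (t - 4 / k)) - l * (t + -k / l + (t - 4 / -k)) =
      2 * (k ^ 2 - 4 * l) / k := by
    field_simp
    ring
  have hA : contactLine t ⬝ᵥ f = 0 := by
    have : 2 * (k ^ 2 - 4 * l) / k * (contactLine t ⬝ᵥ f) = 0 := by
      rw [← hcoef]
      linear_combination h₁ - h₂
    simpa [hk0, hk_sub] using this
  have hB : chordBase l t ⬝ᵥ f = 0 := by simpa [hA] using h₁
  rw [← dot3_eq_dotProduct] at hA hB
  rw [fregierPoint_eq_cross3]
  exact exists_eq_smul_cross3_of_dot3_eq_zero hA hB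
    (fregierPoint_eq_cross3 l t ▸ fregierPoint_ne_zero hl t)

lemma isFregierPoint_point (hl : l ≠ 0) (t : ℝ) :
    IsFregierPoint (Mem l) HypPerp (point l t) (fregierPoint l t) := by
  refine ⟨fregierPoint_ne_zero hl t, isFregier_point hl t, fun f hf0 hf => ?_⟩
  obtain ⟨τ, rfl⟩ := eq_smul_fregierPoint_of_isFregier hl hf
  exact ⟨τ, left_ne_zero_of_smul hf0, rfl⟩

lemma fregierPoint_mem_fregierLocus (hl : l ≠ 0) (t : ℝ) :
    fregierPoint l t ∈ FregierLocus (Mem l) HypPerp :=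
  ⟨point l t, point_ne_zero hl t, mem_point l t, isFregierPoint_point hl t⟩

lemma exists_eq_smul_fregierPoint_of_mem_fregierLocus (hl : l ≠ 0) {f : PP}
    (hf : f ∈ FregierLocus (Mem l) HypPerp) : ∃ τ : ℝ, ∃ t, f = τ • fregierPoint l t := by
  obtain ⟨p, hp0, hp, hfp⟩ := hf
  obtain ⟨c, hc, w, rfl | ⟨t, rfl⟩, rfl⟩ := eq_smul_of_mem hl hp hp0
  · rw [isFregierPoint_smul_iff hc] at hfp
    exact (not_isFregierPoint_of_forall_isFregier (isFregier_contact hl) f hfp).elim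
  · obtain ⟨hf0, hf, -⟩ := (isFregierPoint_smul_iff hc _ _ _).1 hfp
    obtain ⟨τ, -, hτ⟩ := (isFregierPoint_point hl t).2.2 f hf0 hf
    exact ⟨τ, t, hτ⟩

lemma eq_zero_of_forall_dot3_fregierPoint (hl : l ≠ 0) {L : PP}
    (h : ∀ t, dot3 L (fregierPoint l t) = 0) : L = 0 := by
  have h₀ := h 0
  have h₁ := h 1
  have h₂ := h (-1)
  simp only [dot3, fregierPoint, Fin.isValue, cons_val, cons_val_zero, cons_val_one] at h₀ h₁ h₂
  have hL1 : L 1 = 0 := by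
    have : 4 * l * L 1 = 0 := by linear_combination h₂ - h₁
    simpa [hl] using this
  have hL0 : L 0 = 0 := by
    have : 2 * l ^ 2 * L 0 = 0 := by
      linear_combination 5 * h₀ - (5 - l) / 2 * h₁ - (5 - l) / 2 * h₂
    simpa [hl] using this
  have hL2 : L 2 = 0 := by linear_combination (h₁ + h₂ - 2 * (2 * l + 5) * hL0) / 10
  ext i; fin_cases i <;> assumption

end Horocycle

theorem fregier_locus_of_horocycle_general
    (l : ℝ) (hl0 : l ≠ 0) :
    (∀ f ∈ FregierLocus
        (fun v => l * (v 1 ^ 2 + v 2 ^ 2 - v 0 ^ 2) + (v 2 - v 0) ^ 2 = 0) HypPerp,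
      l * (f 1 ^ 2 + f 2 ^ 2 - f 0 ^ 2) + 5 * (f 2 - f 0) ^ 2 = 0) ∧
    ¬ ∃ L : PP, L ≠ 0 ∧
        ∀ f ∈ FregierLocus
          (fun v => l * (v 1 ^ 2 + v 2 ^ 2 - v 0 ^ 2) + (v 2 - v 0) ^ 2 = 0) HypPerp,
          dot3 L f = 0 := by
  refine ⟨fun f hf => ?_, fun ⟨L, hL0, hL⟩ => ?_⟩
  · obtain ⟨τ, t, rfl⟩ := Horocycle.exists_eq_smul_fregierPoint_of_mem_fregierLocus hl0 hf
    simp only [Horocycle.fregierPoint, Pi.smul_apply, smul_eq_mul, Fin.isValue, cons_val,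
      cons_val_zero, cons_val_one]
    ring
  · exact hL0 (Horocycle.eq_zero_of_forall_dot3_fregierPoint hl0
      fun t => hL _ (Horocycle.fregierPoint_mem_fregierLocus hl0 t))

/-- For the horocycle `C : λ(x₁² + x₂² − x₀²) + (x₂ − x₀)² = 0`
(`λ ∉ {0,−1}`), the Frégier locus is contained in the conic
`λ(x₁² + x₂² − x₀²) + 5(x₂ − x₀)² = 0`; in particular the Frégier locus of a
regular horocycle is never contained in a line. -/
theorem fregier_locus_of_horocycle
    (l : ℝ) (hl0 : l ≠ 0) (hl1 : l ≠ -1) :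
    (∀ f ∈ FregierLocus
        (fun v => l * (v 1 ^ 2 + v 2 ^ 2 - v 0 ^ 2) + (v 2 - v 0) ^ 2 = 0) HypPerp,
      l * (f 1 ^ 2 + f 2 ^ 2 - f 0 ^ 2) + 5 * (f 2 - f 0) ^ 2 = 0) ∧
    ¬ ∃ L : PP, L ≠ 0 ∧
        ∀ f ∈ FregierLocus
          (fun v => l * (v 1 ^ 2 + v 2 ^ 2 - v 0 ^ 2) + (v 2 - v 0) ^ 2 = 0) HypPerp,
          dot3 L f = 0 :=
  fregier_locus_of_horocycle_general l hl0
end
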